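/- arXiv:hep-th/0610266 — 3 statements merged into one kernel-verified Lean document; each statement's English description precedes it below -/
import Mathlib

section
/- Let v₁,…,vₙ (n ≥ 4) be the vertices of a convex polygon at height one in ℝ³ in counterclockwise order, and φ* the critical point of F_P on Γₙ = {φ ∈ ℝ≥0ⁿ : Σφⁱ = r}. Then φ*ˢ < r/3 strictly, for every s. -/
/-- The determinant of the 3×3 matrix with columns `a`, `b`, `c`. -/
noncomputable def det3 (a b c : Fin 3 → ℝ) : ℝ :=
  Matrix.det (Matrix.of fun i j => ![a, b, c] j i)

/-!
`F_P` is a cubic form `F` which is affine in each coordinate, so `φˢ ∂ₛF(φ) = F(φ) - F(φ|φˢ=0)`,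
and which is homogeneous, so Euler's identity gives `Σₛ φˢ ∂ₛF(φ) = 3 F(φ)`. At the critical point
all `∂ₛF` equal some `λ`, hence `r λ = 3 F(φ*)` and `φ*ˢ λ = F(φ*) - F(φ*|φ*ˢ=0)`. Since `n ≥ 4`, some
triple of vertices avoids `s`; its positive term makes `F(φ*|φ*ˢ=0) > 0`, whence `φ*ˢ < r/3`.
-/

open Finset Function

theorem fderiv_apply_single_eq_of_update {ι : Type*} [Fintype ι] [DecidableEq ι]
    {f : (ι → ℝ) → ℝ} {φ : ι → ℝ} (hf : DifferentiableAt ℝ f φ) {s : ι} {a b : ℝ}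
    (h : ∀ t, f (update φ s t) = a + t * b) :
    fderiv ℝ f φ (Pi.single s 1) = b := by
  have hcomp : HasDerivAt (f ∘ update φ s) (fderiv ℝ f φ (Pi.single s 1)) (φ s) := by
    have hf' : DifferentiableAt ℝ f (update φ s (φ s)) := by rwa [update_eq_self]
    simpa using hf'.hasFDerivAt.comp_hasDerivAt (φ s) (hasDerivAt_update φ s (φ s))
  have hline : HasDerivAt (f ∘ update φ s) b (φ s) := by
    have : f ∘ update φ s = fun t => a + t * b := funext h
    rw [this]
    simpa using ((hasDerivAt_id (φ s)).mul_const b).const_add a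
  exact hcomp.unique hline

section CubicForm

variable {ι : Type*} [Fintype ι] [LinearOrder ι] [LocallyFiniteOrderTop ι]
  (D : ι → ι → ι → ℝ)

def cubicForm (φ : ι → ℝ) : ℝ :=
  ∑ i, ∑ j ∈ Ioi i, ∑ k ∈ Ioi j, D i j k * φ i * φ j * φ k

theorem cubicForm_smul (c : ℝ) (φ : ι → ℝ) :
    cubicForm D (c • φ) = c ^ 3 * cubicForm D φ := by
  simp only [cubicForm, mul_sum, Pi.smul_apply, smul_eq_mul]
  exact sum_congr rfl fun _ _ => sum_congr rfl fun _ _ => sum_congr rfl fun _ _ => by ring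

theorem differentiable_cubicForm : Differentiable ℝ (cubicForm D) := by
  unfold cubicForm
  fun_prop

theorem fderiv_cubicForm_apply_self (φ : ι → ℝ) :
    fderiv ℝ (cubicForm D) φ φ = 3 * cubicForm D φ := by
  have hchain : HasDerivAt (fun t : ℝ => cubicForm D (t • φ)) (fderiv ℝ (cubicForm D) φ φ) 1 := by
    have := (differentiable_cubicForm D (1 • φ)).hasFDerivAt.comp_hasDerivAt 1
      ((hasDerivAt_id (1 : ℝ)).smul_const φ)
    simpa [comp_def] using this
  have hcubic : HasDerivAt (fun t : ℝ => cubicForm D (t • φ)) (3 * cubicForm D φ) 1 := by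
    simp only [cubicForm_smul]
    simpa using (hasDerivAt_pow 3 (1 : ℝ)).mul_const (cubicForm D φ)
  exact hchain.unique hcubic

theorem sum_mul_fderiv_cubicForm_apply_single (φ : ι → ℝ) :
    ∑ s, φ s * fderiv ℝ (cubicForm D) φ (Pi.single s 1) = 3 * cubicForm D φ := by
  calc ∑ s, φ s * fderiv ℝ (cubicForm D) φ (Pi.single s 1)
      = fderiv ℝ (cubicForm D) φ (∑ s, φ s • Pi.single s 1) := by simp [map_sum, map_smul]
    _ = 3 * cubicForm D φ := by
      simp [← Pi.single_smul, univ_sum_single, fderiv_cubicForm_apply_self]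

/-- Each monomial has three distinct variables, so at most one of them is the `s`-th. -/
theorem cubicForm_update (φ : ι → ℝ) (s : ι) (t : ℝ) :
    cubicForm D (update φ s t) = cubicForm D (update φ s 0) +
      t * (cubicForm D (update φ s 1) - cubicForm D (update φ s 0)) := by
  simp only [cubicForm, ← sum_sub_distrib, mul_sum, ← sum_add_distrib]
  refine sum_congr rfl fun i _ => sum_congr rfl fun j hj => sum_congr rfl fun k hk => ?_
  have hij : i < j := mem_Ioi.1 hj
  have hjk : j < k := mem_Ioi.1 hk
  rcases eq_or_ne i s with rfl | hi
  · simp only [update_self, update_of_ne hij.ne', update_of_ne (hij.trans hjk).ne']; ring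
  rcases eq_or_ne j s with rfl | hj
  · simp only [update_self, update_of_ne hi, update_of_ne hjk.ne']; ring
  rcases eq_or_ne k s with rfl | hk
  · simp only [update_self, update_of_ne hi, update_of_ne hj]; ring
  · simp only [update_of_ne hi, update_of_ne hj, update_of_ne hk]; ring

theorem mul_fderiv_cubicForm_apply_single (φ : ι → ℝ) (s : ι) :
    φ s * fderiv ℝ (cubicForm D) φ (Pi.single s 1) =
      cubicForm D φ - cubicForm D (update φ s 0) := by
  rw [fderiv_apply_single_eq_of_update (differentiable_cubicForm D φ) (cubicForm_update D φ s)]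
  have := cubicForm_update D φ s (φ s)
  rw [update_eq_self] at this
  linarith

theorem cubicForm_pos {D : ι → ι → ι → ℝ} (hD : ∀ i j k, i < j → j < k → 0 < D i j k)
    {φ : ι → ℝ} (hφ : 0 ≤ φ) {a b c : ι} (hab : a < b) (hbc : b < c)
    (ha : 0 < φ a) (hb : 0 < φ b) (hc : 0 < φ c) :
    0 < cubicForm D φ := by
  have hterm : ∀ i j k, i < j → j < k → 0 ≤ D i j k * φ i * φ j * φ k := fun i j k hij hjk =>
    mul_nonneg (mul_nonneg (mul_nonneg (hD i j k hij hjk).le (hφ i)) (hφ j)) (hφ k)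
  refine sum_pos' (fun i _ => sum_nonneg fun j hj => sum_nonneg fun k hk =>
    hterm i j k (mem_Ioi.1 hj) (mem_Ioi.1 hk)) ⟨a, mem_univ a, ?_⟩
  refine sum_pos' (fun j hj => sum_nonneg fun k hk =>
    hterm a j k (mem_Ioi.1 hj) (mem_Ioi.1 hk)) ⟨b, mem_Ioi.2 hab, ?_⟩
  refine sum_pos' (fun k hk => hterm a b k hab (mem_Ioi.1 hk)) ⟨c, mem_Ioi.2 hbc, ?_⟩
  have := hD a b c hab hbc
  positivity

end CubicForm

theorem exists_lt_lt_ne_of_four_le_card {ι : Type*} [Fintype ι] [LinearOrder ι]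
    (hcard : 4 ≤ Fintype.card ι) (s : ι) : ∃ a b c : ι, a < b ∧ b < c ∧ a ≠ s ∧ b ≠ s ∧ c ≠ s := by
  set t := univ.erase s
  have ht : t.card = Fintype.card ι - 1 := by simp [t, card_erase_of_mem]
  let e := t.orderEmbOfFin ht
  have hmem : ∀ m, e m ≠ s := fun m => ne_of_mem_erase (t.orderEmbOfFin_mem ht m)
  refine ⟨e ⟨0, by omega⟩, e ⟨1, by omega⟩, e ⟨2, by omega⟩, ?_, ?_, hmem _, hmem _, hmem _⟩ <;>
    exact e.strictMono (by simp [Fin.lt_def])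

theorem critical_point_strict_bound_general (n : ℕ) (hn : 4 ≤ n)
    (v : Fin n → (Fin 3 → ℝ))
    (hccw : ∀ i j k : Fin n, i < j → j < k → 0 < det3 (v i) (v j) (v k))
    (r : ℝ) (hr : 0 < r)
    (F : (Fin n → ℝ) → ℝ)
    (hF : F = fun φ => ∑ i, ∑ j ∈ Finset.Ioi i, ∑ k ∈ Finset.Ioi j,
      det3 (v i) (v j) (v k) * φ i * φ j * φ k)
    (φs : Fin n → ℝ) (hpos : ∀ i, 0 < φs i) (hsum : ∑ i, φs i = r)
    (hcrit : ∃ lam : ℝ, ∀ s, fderiv ℝ F φs (Pi.single s 1) = lam) :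
    ∀ s : Fin n, φs s < r / 3 := by
  intro s
  obtain ⟨lam, hlam⟩ := hcrit
  set D : Fin n → Fin n → Fin n → ℝ := fun i j k => det3 (v i) (v j) (v k)
  have hFD : F = cubicForm D := hF
  subst hFD
  have heuler : r * lam = 3 * cubicForm D φs := by
    simpa [hlam, ← hsum, sum_mul] using sum_mul_fderiv_cubicForm_apply_single D φs
  have hpartial : φs s * lam = cubicForm D φs - cubicForm D (update φs s 0) := by
    rw [← hlam s, mul_fderiv_cubicForm_apply_single]
  obtain ⟨a, b, c, hab, hbc, ha, hb, hc⟩ := exists_lt_lt_ne_of_four_le_card (by simpa using hn) s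
  have hF_pos : 0 < cubicForm D φs :=
    cubicForm_pos hccw (fun i => (hpos i).le) hab hbc (hpos a) (hpos b) (hpos c)
  have hF_update_pos : 0 < cubicForm D (update φs s 0) :=
    cubicForm_pos hccw (le_update_iff.2 ⟨le_rfl, fun i _ => (hpos i).le⟩) hab hbc
      (by simp [ha, hpos]) (by simp [hb, hpos]) (by simp [hc, hpos])
  have hlam_pos : 0 < lam := pos_of_mul_pos_right (heuler ▸ by positivity) hr.le
  refine lt_of_mul_lt_mul_right (a := lam) ?_ hlam_pos.le
  linarith

/-- For a convex polygon with `n ≥ 4` vertices at height one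
(counterclockwise), the critical point `φ*` of `F_P` on `Γₙ` satisfies the
strict bound `φ*ˢ < r/3` for every `s`. -/
theorem critical_point_strict_bound (n : ℕ) (hn : 4 ≤ n)
    (v : Fin n → (Fin 3 → ℝ)) (hheight : ∀ i, v i 2 = 1)
    (hccw : ∀ i j k : Fin n, i < j → j < k → 0 < det3 (v i) (v j) (v k))
    (r : ℝ) (hr : 0 < r)
    (F : (Fin n → ℝ) → ℝ)
    (hF : F = fun φ => ∑ i, ∑ j ∈ Finset.Ioi i, ∑ k ∈ Finset.Ioi j,
      det3 (v i) (v j) (v k) * φ i * φ j * φ k)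
    (φs : Fin n → ℝ) (hpos : ∀ i, 0 < φs i) (hsum : ∑ i, φs i = r)
    (hcrit : ∃ lam : ℝ, ∀ s, fderiv ℝ F φs (Pi.single s 1) = lam) :
    ∀ s : Fin n, φs s < r / 3 :=
  critical_point_strict_bound_general n hn v hccw r hr F hF φs hpos hsum hcrit
end

section
/- Let v₁,…,vₙ be the vertices at height one of a convex polygon P in ℝ³ (counterclockwise), r > 0, and let b ∈ rP with b in the relative interior of the cone over P. On the fiber π⁻¹(b) = {φ ∈ ℝ≥0ⁿ : Σᵢ φⁱvᵢ = b}, the cubic F̂_P(φ) = Σ_{i<j<k} det(vᵢ,vⱼ,v_k)φⁱφʲφᵏ restricts to the quadratic Q(φ) = Σ_{j<k} det(b,vⱼ,v_k)φʲφᵏ. -/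
open Finset Matrix

lemma det3_eq_dotProduct_cross (a b c : Fin 3 → ℝ) : det3 a b c = a ⬝ᵥ b ⨯₃ c := by
  rw [triple_product_eq_det, det3, ← Matrix.det_transpose]
  congr 1

lemma det3_swap_left (a b c : Fin 3 → ℝ) : det3 b a c = -det3 a b c := by
  rw [det3_eq_dotProduct_cross, det3_eq_dotProduct_cross, triple_product_permutation,
    ← cross_anticomm, dotProduct_neg]

lemma det3_cyclic (a b c : Fin 3 → ℝ) : det3 c a b = det3 a b c := by
  rw [det3_eq_dotProduct_cross, det3_eq_dotProduct_cross, triple_product_permutation]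

lemma det3_self_left (a c : Fin 3 → ℝ) : det3 a a c = 0 := by
  rw [det3_eq_dotProduct_cross, dot_self_cross]

lemma det3_sum_smul_left {ι : Type*} (s : Finset ι) (φ : ι → ℝ) (v : ι → Fin 3 → ℝ)
    (w u : Fin 3 → ℝ) : det3 (∑ i ∈ s, φ i • v i) w u = ∑ i ∈ s, φ i * det3 (v i) w u := by
  simp only [det3_eq_dotProduct_cross, sum_dotProduct, smul_dotProduct, smul_eq_mul]

section Alternating

variable {ι M : Type*} [AddCommGroup M]

theorem Finset.sum_sum_eq_zero_of_antisymm [DecidableEq ι] (s : Finset ι) {f : ι → ι → M}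
    (hswap : ∀ i j, f j i = -f i j) (hdiag : ∀ i, f i i = 0) :
    ∑ i ∈ s, ∑ j ∈ s, f i j = 0 := by
  induction s using Finset.induction_on with
  | empty => simp
  | insert a s ha ih =>
    simp only [sum_insert ha, sum_add_distrib, ih, hdiag, hswap a, sum_neg_distrib]
    abel

/-- Inserting a new maximum `a` adds `∑_{j<k} T j k a` to both sides; the other new terms on the
left, `∑_{i,j} T i j a`, cancel by antisymmetry. -/
theorem Finset.sum_lt_sum_eq_sum_lt_lt_of_alternating [LinearOrder ι] (s : Finset ι)
    {T : ι → ι → ι → M} (hswap : ∀ i j k, T j i k = -T i j k)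
    (hcyc : ∀ i j k, T k i j = T i j k) (hdiag : ∀ i k, T i i k = 0) :
    ∑ j ∈ s, ∑ k ∈ s with j < k, ∑ i ∈ s, T i j k
      = ∑ i ∈ s, ∑ j ∈ s with i < j, ∑ k ∈ s with j < k, T i j k := by
  induction s using Finset.induction_on_max with
  | empty => simp
  | insert a s hlt ih =>
    have ha : a ∉ s := fun h => lt_irrefl a (hlt a h)
    have hfilter : ∀ x ∈ s, ({y ∈ insert a s | x < y} : Finset ι) = insert a {y ∈ s | x < y} :=
      fun x hx => by rw [filter_insert, if_pos (hlt x hx)]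
    have hfilter_max : ({y ∈ insert a s | a < y} : Finset ι) = ∅ := by
      rw [filter_insert, if_neg (lt_irrefl a), filter_eq_empty_iff]
      exact fun x hx => (hlt x hx).asymm
    have hzero : ∑ j ∈ s, ∑ i ∈ s, T i j a = 0 :=
      sum_sum_eq_zero_of_antisymm s (fun j i => hswap i j a) (fun j => hdiag j a)
    have hnot_mem : ∀ x ∈ s, a ∉ ({y ∈ s | x < y} : Finset ι) :=
      fun _ _ h => ha (mem_filter.1 h).1
    have hleft : ∑ j ∈ insert a s, ∑ k ∈ insert a s with j < k, ∑ i ∈ insert a s, T i j k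
        = ∑ j ∈ s, ∑ k ∈ s with j < k, ∑ i ∈ s, T i j k + ∑ j ∈ s, ∑ k ∈ s with j < k, T j k a := by
      have hinner : ∀ j k, ∑ i ∈ insert a s, T i j k = T j k a + ∑ i ∈ s, T i j k :=
        fun j k => by rw [sum_insert ha, hcyc]
      rw [sum_insert ha, hfilter_max, sum_empty, zero_add]
      calc _ = ∑ j ∈ s, (∑ i ∈ s, T i j a
                + ∑ k ∈ s with j < k, (T j k a + ∑ i ∈ s, T i j k)) :=
            sum_congr rfl fun j hj => by
              rw [hfilter j hj, sum_insert (hnot_mem j hj), hinner, hcyc, hdiag, zero_add]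
              simp only [hinner]
        _ = _ := by simp only [sum_add_distrib, hzero, zero_add, add_comm]
    have hright :
        ∑ i ∈ insert a s, ∑ j ∈ insert a s with i < j, ∑ k ∈ insert a s with j < k, T i j k
        = ∑ i ∈ s, ∑ j ∈ s with i < j, ∑ k ∈ s with j < k, T i j k
          + ∑ i ∈ s, ∑ j ∈ s with i < j, T i j a := by
      rw [sum_insert ha, hfilter_max, sum_empty, zero_add, ← sum_add_distrib]
      refine sum_congr rfl fun i hi => ?_
      rw [hfilter i hi, sum_insert (hnot_mem i hi), hfilter_max, sum_empty, zero_add,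
        ← sum_add_distrib]
      refine sum_congr rfl fun j hj => ?_
      rw [hfilter j (mem_filter.1 hj).1, sum_insert (hnot_mem j (mem_filter.1 hj).1), add_comm]
    rw [hleft, hright, ih]

end Alternating

theorem cubic_restricts_to_quadratic_on_fiber_general (n : ℕ) (v : Fin n → (Fin 3 → ℝ)) (b : Fin 3 → ℝ) :
    ∀ φ : Fin n → ℝ, (∀ i, 0 ≤ φ i) → ∑ i, φ i • v i = b →
      (∑ i, ∑ j ∈ Finset.Ioi i, ∑ k ∈ Finset.Ioi j,
          det3 (v i) (v j) (v k) * φ i * φ j * φ k)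
        = ∑ j, ∑ k ∈ Finset.Ioi j, det3 b (v j) (v k) * φ j * φ k := by
  rintro φ - rfl
  have hexpand : ∀ j k, det3 (∑ i, φ i • v i) (v j) (v k) * φ j * φ k
      = ∑ i, det3 (v i) (v j) (v k) * φ i * φ j * φ k := fun j k => by
    rw [det3_sum_smul_left, sum_mul, sum_mul]
    exact sum_congr rfl fun i _ => by ring
  simp only [hexpand, ← filter_lt_eq_Ioi]
  refine (sum_lt_sum_eq_sum_lt_lt_of_alternating univ (fun i j k => ?_) (fun i j k => ?_)
    (fun i k => ?_)).symm
  · rw [det3_swap_left]; ring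
  · rw [det3_cyclic]; ring
  · rw [det3_self_left]; ring

/-- On the fiber `π⁻¹(b) = {φ ∈ ℝ≥0ⁿ : Σᵢ φⁱvᵢ = b}` over a
point `b` of the relative interior of the cone over the polygon (at height
`r`), the cubic `F̂_P(φ) = Σ_{i<j<k} det(vᵢ,vⱼ,v_k)φⁱφʲφᵏ` restricts to the
quadratic `Q(φ) = Σ_{j<k} det(b,vⱼ,v_k)φʲφᵏ`. -/
theorem cubic_restricts_to_quadratic_on_fiber (n : ℕ) (hn : 3 ≤ n)
    (v : Fin n → (Fin 3 → ℝ)) (hheight : ∀ i, v i 2 = 1)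
    (hccw : ∀ i j k : Fin n, i < j → j < k → 0 < det3 (v i) (v j) (v k))
    (r : ℝ) (hr : 0 < r) (b : Fin 3 → ℝ) (hb : b 2 = r)
    (hbint : ∃ ψ : Fin n → ℝ, (∀ i, 0 < ψ i) ∧ ∑ i, ψ i • v i = b) :
    ∀ φ : Fin n → ℝ, (∀ i, 0 ≤ φ i) → ∑ i, φ i • v i = b →
      (∑ i, ∑ j ∈ Finset.Ioi i, ∑ k ∈ Finset.Ioi j,
          det3 (v i) (v j) (v k) * φ i * φ j * φ k)
        = ∑ j, ∑ k ∈ Finset.Ioi j, det3 b (v j) (v k) * φ j * φ k :=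
  cubic_restricts_to_quadratic_on_fiber_general n v b
end

section
/- Let P be a convex polygon at height one in ℝ³ with vertices v₁,…,vₙ (n ≥ 4) in counterclockwise order, and let Q = conv(v₁,…,v_{n−1}) be the polygon obtained by deleting vₙ. Then for every φ in the relative interior of Γ_{n−1} = {φ ∈ ℝ≥0^{n−1} : Σφⁱ = r}, there exists ψ in the relative interior of Γₙ with F_Q(φ) < F_P(ψ); consequently max over Γ_{n−1} of F_Q is strictly less than max over Γₙ of F_P. -/
set_option maxHeartbeats 1000000

lemma det3_expand (a b c : Fin 3 → ℝ) : det3 a b c =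
    a 0 * b 1 * c 2 - a 0 * c 1 * b 2 - b 0 * a 1 * c 2 + b 0 * c 1 * a 2
      + c 0 * a 1 * b 2 - c 0 * b 1 * a 2 := by
  simp [det3, Matrix.det_fin_three]

lemma det3_syzygy (a m b x p q : Fin 3 → ℝ) :
    det3 a m b * det3 p q x =
      det3 m b x * det3 p q a - det3 a b x * det3 p q m + det3 a m x * det3 p q b := by
  simp only [det3_expand]; ring

lemma det3_rot (a b c : Fin 3 → ℝ) : det3 a b c = det3 c a b := by
  simp only [det3_expand]; ring

lemma det3_swap23 (a b c : Fin 3 → ℝ) : det3 a b c = - det3 a c b := by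
  simp only [det3_expand]; ring

lemma det3_eq13 (a b : Fin 3 → ℝ) : det3 a b a = 0 := by
  simp only [det3_expand]; ring

lemma det3_eq23 (a b : Fin 3 → ℝ) : det3 a b b = 0 := by
  simp only [det3_expand]; ring

lemma det3_height (a m b x : Fin 3 → ℝ) (ha : a 2 = 1) (hm : m 2 = 1) (hb : b 2 = 1)
    (hx : x 2 = 1) : det3 m b x - det3 a b x + det3 a m x = det3 a m b := by
  simp only [det3_expand, ha, hm, hb, hx]; ring

lemma dv_sum_Ioi {m : ℕ} (x : Fin m) (g : Fin m → ℝ) :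
    ∑ y ∈ Finset.Ioi x, g y = ∑ y, if x < y then g y else 0 := by
  rw [← Finset.sum_filter]
  congr 1
  ext y
  simp

lemma dv_triple_norm {m : ℕ} (F : Fin m → Fin m → Fin m → ℝ) :
    (∑ i, ∑ j ∈ Finset.Ioi i, ∑ k ∈ Finset.Ioi j, F i j k)
      = ∑ i, ∑ j, ∑ k, if i < j then if j < k then F i j k else 0 else 0 := by
  refine Finset.sum_congr rfl fun i _ => ?_
  rw [dv_sum_Ioi]
  refine Finset.sum_congr rfl fun j _ => ?_
  split_ifs with h
  · rw [dv_sum_Ioi]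
  · simp

lemma ite_and_order {m : ℕ} (p X q : Fin m) (x : ℝ) :
    (if p < X then (if X < q then x else 0) else 0)
      = if p < q then (if p < X ∧ X < q then x else 0) else 0 := by
  by_cases h1 : p < X
  · by_cases h2 : X < q
    · simp [h1, h2, h1.trans h2]
    · simp [h1, h2]
  · simp [h1]

lemma dv_collapse {m : ℕ} (w : Fin m → Fin m → Fin m → ℝ) (η c : Fin m → ℝ) :
    (∑ i, ∑ j, ∑ k, if i < j then (if j < k then
        w i j k * (c i * η j * η k + η i * c j * η k + η i * η j * c k) else 0) else 0)
  = ∑ X, c X * (∑ p, ∑ q, if p < q then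
      ((if X < p then w X p q * η p * η q else 0)
      + (if p < X ∧ X < q then w p X q * η p * η q else 0)
      + (if q < X then w p q X * η p * η q else 0)) else 0) := by
  have hR : ∀ X : Fin m, c X * (∑ p, ∑ q, if p < q then
      ((if X < p then w X p q * η p * η q else 0)
      + (if p < X ∧ X < q then w p X q * η p * η q else 0)
      + (if q < X then w p q X * η p * η q else 0)) else 0)
    = (∑ p, ∑ q, ((if p < q then (if X < p then c X * (w X p q * η p * η q) else 0) else 0)
      + ((if p < q then (if p < X ∧ X < q then c X * (w p X q * η p * η q) else 0) else 0)
      + (if p < q then (if q < X then c X * (w p q X * η p * η q) else 0) else 0)))) := by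
    intro X
    rw [Finset.mul_sum]
    refine Finset.sum_congr rfl fun p _ => ?_
    rw [Finset.mul_sum]
    refine Finset.sum_congr rfl fun q _ => ?_
    split_ifs <;> ring
  simp only [hR, Finset.sum_add_distrib]
  have hL : ∀ (i j k : Fin m), (if i < j then (if j < k then
        w i j k * (c i * η j * η k + η i * c j * η k + η i * η j * c k) else 0) else 0)
      = (if i < j then (if j < k then w i j k * (c i * η j * η k) else 0) else 0)
        + ((if i < j then (if j < k then w i j k * (η i * c j * η k) else 0) else 0)
        + (if i < j then (if j < k then w i j k * (η i * η j * c k) else 0) else 0)) := by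
    intro i j k
    split_ifs <;> ring
  simp only [hL, Finset.sum_add_distrib]
  congr 1
  · refine Finset.sum_congr rfl fun X _ => Finset.sum_congr rfl fun p _ =>
      Finset.sum_congr rfl fun q _ => ?_
    split_ifs <;> ring
  congr 1
  · rw [Finset.sum_comm]
    refine Finset.sum_congr rfl fun X _ => Finset.sum_congr rfl fun p _ => ?_
    refine Finset.sum_congr rfl fun q _ => ?_
    calc (if p < X then (if X < q then w p X q * (η p * c X * η q) else 0) else 0)
        = (if p < X then (if X < q then c X * (w p X q * η p * η q) else 0) else 0) := by
          split_ifs <;> ring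
      _ = _ := ite_and_order p X q _
  · rw [show (∑ i, ∑ j, ∑ k, if i < j then (if j < k then w i j k * (η i * η j * c k) else 0) else 0)
        = ∑ p, ∑ X, ∑ q, if p < q then (if q < X then w p q X * (η p * η q * c X) else 0) else 0 from
      Finset.sum_congr rfl fun p _ => Finset.sum_comm]
    rw [Finset.sum_comm]
    refine Finset.sum_congr rfl fun X _ => Finset.sum_congr rfl fun p _ =>
      Finset.sum_congr rfl fun q _ => ?_
    split_ifs <;> ring

lemma dv_key {n : ℕ} (v : Fin (n+1) → (Fin 3 → ℝ)) (hheight : ∀ i, v i 2 = 1)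
    (hccw : ∀ i j k : Fin (n+1), i < j → j < k → 0 < det3 (v i) (v j) (v k))
    (η : Fin (n+1) → ℝ) (hη : ∀ i, 0 ≤ η i) (hlast : η (Fin.last n) = 0)
    (A Mi B : Fin (n+1)) (hAM : A < Mi) (hMB : Mi < B) (hBl : B < Fin.last n)
    (hA : 0 < η A) (hB : 0 < η B)
    (hsupp : ∀ i, η i ≠ 0 → A ≤ i ∧ i ≤ B) :
    ∃ ψ : Fin (n+1) → ℝ, (∀ i, 0 ≤ ψ i) ∧ (∀ i, η i ≠ 0 → 0 < ψ i) ∧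
      0 < ψ (Fin.last n) ∧ (∑ i, ψ i) = ∑ i, η i ∧
      (∑ i, ∑ j ∈ Finset.Ioi i, ∑ k ∈ Finset.Ioi j,
        |det3 (v i) (v j) (v k)| * η i * η j * η k) <
      (∑ i, ∑ j ∈ Finset.Ioi i, ∑ k ∈ Finset.Ioi j,
        |det3 (v i) (v j) (v k)| * ψ i * ψ j * ψ k) := by
  set N : Fin (n+1) := Fin.last n with hN
  obtain ⟨E, hE⟩ : ∃ E, E = det3 (v A) (v Mi) (v B) := ⟨_, rfl⟩
  obtain ⟨A', hA'⟩ : ∃ A', A' = det3 (v Mi) (v B) (v N) := ⟨_, rfl⟩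
  obtain ⟨B', hB'⟩ : ∃ B', B' = det3 (v A) (v B) (v N) := ⟨_, rfl⟩
  obtain ⟨C', hC'⟩ : ∃ C', C' = det3 (v A) (v Mi) (v N) := ⟨_, rfl⟩
  have hE0 : 0 < E := hE ▸ hccw A Mi B hAM hMB
  have hA'0 : 0 < A' := hA' ▸ hccw Mi B N hMB hBl
  have hB'0 : 0 < B' := hB' ▸ hccw A B N (hAM.trans hMB) hBl
  have hC'0 : 0 < C' := hC' ▸ hccw A Mi N hAM (hMB.trans hBl)
  have hAMne : ¬ A = Mi := hAM.ne
  have hMAne : ¬ Mi = A := fun h => hAM.ne h.symm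
  have hABne : ¬ A = B := (hAM.trans hMB).ne
  have hANne : ¬ A = N := ((hAM.trans hMB).trans hBl).ne
  have hMBne : ¬ Mi = B := hMB.ne
  have hMNne : ¬ Mi = N := (hMB.trans hBl).ne
  have hBNne : ¬ B = N := hBl.ne
  have hNAne : ¬ N = A := fun h => hANne h.symm
  have hNMne : ¬ N = Mi := fun h => hMNne h.symm
  have hNBne : ¬ N = B := fun h => hBNne h.symm
  have hBAne : ¬ B = A := fun h => hABne h.symm
  have hBMne : ¬ B = Mi := fun h => hMBne h.symm
  obtain ⟨u, hu⟩ : ∃ u : Fin (n+1) → ℝ, u = fun i =>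
      (if i = N then E else 0) + (if i = Mi then B' else 0)
        - (if i = A then A' else 0) - (if i = B then C' else 0) := ⟨_, rfl⟩
  have huN : u N = E := by rw [hu]; simp [hNAne, hNMne, hNBne]
  have huM : u Mi = B' := by rw [hu]; simp [hMNne, hMBne, hMAne]
  have huA : u A = -A' := by rw [hu]; simp [hAMne, hABne, hANne]
  have huB : u B = -C' := by rw [hu]; simp [hBNne, hBAne, hBMne]
  have huother : ∀ i, ¬ i = A → ¬ i = Mi → ¬ i = B → ¬ i = N → u i = 0 := by
    intro i h1 h2 h3 h4; rw [hu]; simp [h1, h2, h3, h4]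
  have hheq := det3_height (v A) (v Mi) (v B) (v N) (hheight A) (hheight Mi) (hheight B)
    (hheight N)
  have husum : (∑ i, u i) = 0 := by
    rw [hu]
    simp only [Finset.sum_sub_distrib, Finset.sum_add_distrib, Finset.sum_ite_eq',
      Finset.mem_univ, if_pos]
    rw [hE, hA', hB', hC']
    linarith [hheq]
  -- normal form with abs removed
  have habs : ∀ ψ : Fin (n+1) → ℝ,
      (∑ i, ∑ j ∈ Finset.Ioi i, ∑ k ∈ Finset.Ioi j,
        |det3 (v i) (v j) (v k)| * ψ i * ψ j * ψ k)
      = ∑ i, ∑ j, ∑ k, if i < j then (if j < k then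
          det3 (v i) (v j) (v k) * ψ i * ψ j * ψ k else 0) else 0 := by
    intro ψ
    rw [dv_triple_norm]
    refine Finset.sum_congr rfl fun i _ => Finset.sum_congr rfl fun j _ =>
      Finset.sum_congr rfl fun k _ => ?_
    split_ifs with h1 h2
    · rw [abs_of_pos (hccw i j k h1 h2)]
    · rfl
    · rfl
  obtain ⟨g, hg⟩ : ∃ g : ℝ → ℝ, g = fun ε => ∑ i, ∑ j, ∑ k, if i < j then (if j < k then
      det3 (v i) (v j) (v k) * (η i + ε * u i) * (η j + ε * u j) * (η k + ε * u k)
        else 0) else 0 := ⟨_, rfl⟩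
  obtain ⟨T, hT⟩ : ∃ T, T = ∑ i, ∑ j, ∑ k, if i < j then (if j < k then
      det3 (v i) (v j) (v k) *
        (u i * η j * η k + η i * u j * η k + η i * η j * u k) else 0) else 0 := ⟨_, rfl⟩
  have hderiv : HasDerivAt g T 0 := by
    rw [hg, hT]
    refine HasDerivAt.fun_sum fun i _ => HasDerivAt.fun_sum fun j _ => HasDerivAt.fun_sum fun k _ => ?_
    by_cases h1 : i < j
    · by_cases h2 : j < k
      · simp only [if_pos h1, if_pos h2]
        have l : ∀ p : Fin (n+1), HasDerivAt (fun ε : ℝ => η p + ε * u p) (u p) 0 :=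
          fun p => by simpa using ((hasDerivAt_id (0:ℝ)).mul_const (u p)).const_add (η p)
        have hd := (((l i).const_mul (det3 (v i) (v j) (v k))).fun_mul (l j)).fun_mul (l k)
        convert hd using 1
        all_goals first | rfl | ring
      · simp only [if_pos h1, if_neg h2]; exact hasDerivAt_const _ _
    · simp only [if_neg h1]; exact hasDerivAt_const _ _
  -- pair sums
  obtain ⟨S2, hS2⟩ : ∃ S2 : (Fin 3 → ℝ) → ℝ, S2 = fun x =>
      ∑ p, ∑ q, if p < q then η p * η q * det3 (v p) (v q) x else 0 := ⟨_, rfl⟩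
  obtain ⟨R, hR⟩ : ∃ R : Fin (n+1) → ℝ, R = fun X => ∑ p, ∑ q, if p < q then
      (if p < X ∧ X < q then det3 (v p) (v X) (v q) * η p * η q else 0) else 0 := ⟨_, rfl⟩
  obtain ⟨W, hW⟩ : ∃ W : Fin (n+1) → ℝ, W = fun X => ∑ p, ∑ q, if p < q then
      ((if X < p then det3 (v X) (v p) (v q) * η p * η q else 0)
      + (if p < X ∧ X < q then det3 (v p) (v X) (v q) * η p * η q else 0)
      + (if q < X then det3 (v p) (v q) (v X) * η p * η q else 0)) else 0 := ⟨_, rfl⟩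
  have hTW : T = E * W N + B' * W Mi - A' * W A - C' * W B := by
    rw [hT]
    rw [show (∑ i, ∑ j, ∑ k, if i < j then (if j < k then
        det3 (v i) (v j) (v k) *
          (u i * η j * η k + η i * u j * η k + η i * η j * u k) else 0) else 0)
      = ∑ X, u X * W X from by
        rw [dv_collapse (fun i j k => det3 (v i) (v j) (v k)) η u]
        exact Finset.sum_congr rfl fun X _ => by rw [hW]]
    have : ∀ X : Fin (n+1), u X * W X =
        (if X = N then E * W X else 0) + (if X = Mi then B' * W X else 0)
        - (if X = A then A' * W X else 0) - (if X = B then C' * W X else 0) := by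
      intro X
      simp only [hu]
      split_ifs <;> ring
    simp only [this, Finset.sum_sub_distrib, Finset.sum_add_distrib, Finset.sum_ite_eq',
      Finset.mem_univ, if_pos]
  have hWX : ∀ X, W X = S2 (v X) + 2 * R X := by
    intro X
    rw [hW, hS2, hR]
    simp only [Finset.mul_sum, ← Finset.sum_add_distrib]
    refine Finset.sum_congr rfl fun p _ => Finset.sum_congr rfl fun q _ => ?_
    by_cases hpq : p < q
    · simp only [if_pos hpq]
      rcases lt_trichotomy X p with h | h | h
      · have h' : X < q := h.trans hpq
        simp only [if_pos h, if_neg (asymm h), if_neg (asymm h'),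
          if_neg (show ¬ (p < X ∧ X < q) from fun hc => absurd hc.1 (asymm h))]
        linear_combination (-(η p * η q)) * det3_rot (v p) (v q) (v X)
      · subst h
        simp only [if_neg (lt_irrefl X), if_neg (asymm hpq),
          if_neg (show ¬ (X < X ∧ X < q) from fun hc => absurd hc.1 (lt_irrefl X))]
        rw [det3_eq13]
        ring
      · rcases lt_trichotomy X q with h2 | h2 | h2
        · simp only [if_neg (asymm h), if_pos (And.intro h h2), if_neg (asymm h2)]
          linear_combination (-(η p * η q)) * det3_swap23 (v p) (v q) (v X)
        · subst h2
          simp only [if_neg (asymm h), if_neg (lt_irrefl X),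
            if_neg (show ¬ (p < X ∧ X < X) from fun hc => absurd hc.2 (lt_irrefl X))]
          rw [det3_eq23]
          ring
        · simp only [if_neg (asymm h), if_pos h2,
            if_neg (show ¬ (p < X ∧ X < q) from fun hc => absurd hc.2 (asymm h2))]
          ring
    · simp [hpq]
  have hsyz : E * S2 (v N) - A' * S2 (v A) + B' * S2 (v Mi) - C' * S2 (v B) = 0 := by
    rw [hS2]
    simp only [Finset.mul_sum, ← Finset.sum_sub_distrib, ← Finset.sum_add_distrib]
    refine Finset.sum_eq_zero fun p _ => Finset.sum_eq_zero fun q _ => ?_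
    by_cases hpq : p < q
    · simp only [if_pos hpq]
      rw [hE, hA', hB', hC']
      linear_combination (η p * η q) * det3_syzygy (v A) (v Mi) (v B) (v N) (v p) (v q)
    · simp [hpq]
  have hRN : R N = 0 := by
    rw [hR]
    refine Finset.sum_eq_zero fun p _ => Finset.sum_eq_zero fun q _ => ?_
    have : ¬ N < q := not_lt.mpr (Fin.le_last q)
    simp [this]
  have hRA : R A = 0 := by
    rw [hR]
    refine Finset.sum_eq_zero fun p _ => Finset.sum_eq_zero fun q _ => ?_
    split_ifs with h1 h2
    · have : η p = 0 := by
        by_contra hc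
        exact absurd (hsupp p hc).1 (not_le.mpr h2.1)
      rw [this]; ring
    · rfl
    · rfl
  have hRB : R B = 0 := by
    rw [hR]
    refine Finset.sum_eq_zero fun p _ => Finset.sum_eq_zero fun q _ => ?_
    split_ifs with h1 h2
    · have : η q = 0 := by
        by_contra hc
        exact absurd (hsupp q hc).2 (not_le.mpr h2.2)
      rw [this]; ring
    · rfl
    · rfl
  have hRMi : E * (η A * η B) ≤ R Mi := by
    have hterm : ∀ p q : Fin (n+1), 0 ≤ (if p < q then
        (if p < Mi ∧ Mi < q then det3 (v p) (v Mi) (v q) * η p * η q else 0) else 0) := by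
      intro p q
      split_ifs with h1 h2
      · exact mul_nonneg (mul_nonneg (hccw p Mi q h2.1 h2.2).le (hη p)) (hη q)
      · exact le_rfl
      · exact le_rfl
    have hstep1 : (∑ q, if A < q then
        (if A < Mi ∧ Mi < q then det3 (v A) (v Mi) (v q) * η A * η q else 0) else 0)
        ≤ R Mi := by
      rw [hR]
      exact Finset.single_le_sum
        (f := fun p => ∑ q, if p < q then
          (if p < Mi ∧ Mi < q then det3 (v p) (v Mi) (v q) * η p * η q else 0) else 0)
        (fun p _ => Finset.sum_nonneg fun q _ => hterm p q) (Finset.mem_univ A)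
    have hstep2 : (if A < B then
        (if A < Mi ∧ Mi < B then det3 (v A) (v Mi) (v B) * η A * η B else 0) else 0)
        ≤ ∑ q, if A < q then
          (if A < Mi ∧ Mi < q then det3 (v A) (v Mi) (v q) * η A * η q else 0) else 0 :=
      Finset.single_le_sum (f := fun q => if A < q then
          (if A < Mi ∧ Mi < q then det3 (v A) (v Mi) (v q) * η A * η q else 0) else 0)
        (fun q _ => hterm A q) (Finset.mem_univ B)
    rw [if_pos (hAM.trans hMB), if_pos (And.intro hAM hMB)] at hstep2
    rw [hE]
    calc det3 (v A) (v Mi) (v B) * (η A * η B)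
        = det3 (v A) (v Mi) (v B) * η A * η B := by ring
      _ ≤ _ := le_trans hstep2 hstep1
  have hT2 : T = 2 * (B' * R Mi) := by
    rw [hTW, hWX N, hWX Mi, hWX A, hWX B, hRN, hRA, hRB]
    linear_combination hsyz
  have hRpos : 0 < R Mi := lt_of_lt_of_le (mul_pos hE0 (mul_pos hA hB)) hRMi
  have hTpos : 0 < T := by rw [hT2]; exact mul_pos two_pos (mul_pos hB'0 hRpos)
  obtain ⟨δ, hδ0, hδA, hδB⟩ : ∃ δ : ℝ, 0 < δ ∧ δ * A' < η A ∧ δ * C' < η B := by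
    refine ⟨min (η A / (2 * A')) (η B / (2 * C')),
      lt_min (div_pos hA (mul_pos two_pos hA'0)) (div_pos hB (mul_pos two_pos hC'0)), ?_, ?_⟩
    · have h1 : min (η A / (2 * A')) (η B / (2 * C')) * A' ≤ (η A / (2 * A')) * A' :=
        mul_le_mul_of_nonneg_right (min_le_left _ _) hA'0.le
      have h3 : (η A / (2 * A')) * A' = η A / 2 := by
        field_simp
      nlinarith
    · have h1 : min (η A / (2 * A')) (η B / (2 * C')) * C' ≤ (η B / (2 * C')) * C' :=
        mul_le_mul_of_nonneg_right (min_le_right _ _) hC'0.le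
      have h3 : (η B / (2 * C')) * C' = η B / 2 := by
        field_simp
      nlinarith
  have htend := hasDerivAt_iff_tendsto_slope.mp hderiv
  have h1 : ∀ᶠ x in nhdsWithin (0:ℝ) {(0:ℝ)}ᶜ, 0 < slope g 0 x :=
    htend.eventually (lt_mem_nhds hTpos)
  have h2 : nhdsWithin (0:ℝ) (Set.Ioi 0) ≤ nhdsWithin (0:ℝ) {(0:ℝ)}ᶜ :=
    nhdsWithin_mono 0 (fun x hx => Set.mem_compl_singleton_iff.mpr (ne_of_gt hx))
  have h3 := h1.filter_mono h2
  have h4 : ∀ᶠ ε in nhdsWithin (0:ℝ) (Set.Ioi 0), ε < δ := by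
    filter_upwards [Ioo_mem_nhdsGT_of_mem (Set.mem_Ico.mpr ⟨le_refl (0:ℝ), hδ0⟩)] with x hx
    exact hx.2
  have h5 : ∀ᶠ ε in nhdsWithin (0:ℝ) (Set.Ioi 0), 0 < ε := by
    filter_upwards [self_mem_nhdsWithin] with x hx
    exact hx
  obtain ⟨ε, hsl, hεδ, hε0⟩ := (h3.and (h4.and h5)).exists
  obtain ⟨hεδ, hε0⟩ := And.intro hεδ hε0
  have hgε : g 0 < g ε := by
    rw [slope_def_field, sub_zero] at hsl
    have hm := mul_pos hsl hε0
    rw [div_mul_cancel₀ _ (ne_of_gt hε0)] at hm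
    linarith
  have hεA' : ε * A' < η A := lt_trans (mul_lt_mul_of_pos_right hεδ hA'0) hδA
  have hεC' : ε * C' < η B := lt_trans (mul_lt_mul_of_pos_right hεδ hC'0) hδB
  have hψ : ∀ i, (0 ≤ η i + ε * u i) ∧ (η i ≠ 0 → 0 < η i + ε * u i) := by
    intro i
    by_cases h1 : i = A
    · rw [h1, huA]
      constructor
      · nlinarith
      · intro _; nlinarith
    by_cases h2 : i = Mi
    · rw [h2, huM]
      have hp : 0 < η Mi + ε * B' := by nlinarith [hη Mi, mul_pos hε0 hB'0]
      exact ⟨hp.le, fun _ => hp⟩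
    by_cases h3 : i = B
    · rw [h3, huB]
      constructor
      · nlinarith
      · intro _; nlinarith
    by_cases h4 : i = N
    · rw [h4, huN, hlast]
      have hp : 0 < (0:ℝ) + ε * E := by nlinarith [mul_pos hε0 hE0]
      exact ⟨hp.le, fun _ => hp⟩
    · rw [huother i h1 h2 h3 h4, mul_zero, add_zero]
      exact ⟨hη i, fun h => (hη i).lt_of_ne (Ne.symm h)⟩
  have hψN : 0 < η N + ε * u N := by
    rw [huN, hlast]
    nlinarith [mul_pos hε0 hE0]
  refine ⟨fun i => η i + ε * u i, fun i => (hψ i).1, fun i => (hψ i).2, hψN, ?_, ?_⟩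
  · rw [Finset.sum_add_distrib, ← Finset.mul_sum, husum, mul_zero, add_zero]
  · have e0 : g 0 = ∑ i, ∑ j, ∑ k, if i < j then (if j < k then
        det3 (v i) (v j) (v k) * η i * η j * η k else 0) else 0 := by
      simp only [hg, zero_mul, add_zero]
    have e2 : g ε = ∑ i, ∑ j, ∑ k, if i < j then (if j < k then
        det3 (v i) (v j) (v k) * (η i + ε * u i) * (η j + ε * u j) * (η k + ε * u k)
          else 0) else 0 := by
      simp only [hg]
    simp only [habs]
    rw [← e0, ← e2]
    exact hgε

lemma dv_snoc {n : ℕ} (v : Fin (n+1) → (Fin 3 → ℝ)) (φ : Fin n → ℝ) :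
    (∑ i, ∑ j ∈ Finset.Ioi i, ∑ k ∈ Finset.Ioi j,
      |det3 (v i) (v j) (v k)| * (Fin.snoc φ 0 : Fin (n+1) → ℝ) i *
        (Fin.snoc φ 0 : Fin (n+1) → ℝ) j * (Fin.snoc φ 0 : Fin (n+1) → ℝ) k)
  = ∑ i, ∑ j ∈ Finset.Ioi i, ∑ k ∈ Finset.Ioi j,
      |det3 (v i.castSucc) (v j.castSucc) (v k.castSucc)| * φ i * φ j * φ k := by
  rw [dv_triple_norm, dv_triple_norm]
  have hnl : ∀ k : Fin n, ¬ (Fin.last n < k.castSucc) := fun k => lt_asymm (Fin.castSucc_lt_last k)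
  simp [Fin.sum_univ_castSucc, Fin.snoc_castSucc, Fin.snoc_last, hnl,
    Fin.castSucc_lt_castSucc_iff]

lemma dv_snoc_sum {n : ℕ} (φ : Fin n → ℝ) :
    (∑ i, (Fin.snoc φ 0 : Fin (n+1) → ℝ) i) = ∑ i, φ i := by
  rw [Fin.sum_univ_castSucc]
  simp [Fin.snoc_castSucc, Fin.snoc_last]

lemma dv_snoc_nonneg {n : ℕ} (φ : Fin n → ℝ) (hφ : ∀ i, 0 ≤ φ i) :
    ∀ i, 0 ≤ (Fin.snoc φ 0 : Fin (n+1) → ℝ) i := by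
  intro i
  induction i using Fin.lastCases with
  | last => simp
  | cast j => simp only [Fin.snoc_castSucc]; exact hφ j

lemma dv_pos {m : ℕ} (w : Fin m → Fin m → Fin m → ℝ)
    (hw : ∀ i j k : Fin m, i < j → j < k → 0 < w i j k)
    (φ : Fin m → ℝ) (hφ : ∀ i, 0 < φ i) (i0 j0 k0 : Fin m) (h1 : i0 < j0) (h2 : j0 < k0) :
    0 < ∑ i, ∑ j ∈ Finset.Ioi i, ∑ k ∈ Finset.Ioi j, w i j k * φ i * φ j * φ k := by
  have tnn : ∀ i j k : Fin m, i < j → j < k → 0 ≤ w i j k * φ i * φ j * φ k :=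
    fun i j k hij hjk => le_of_lt
      (mul_pos (mul_pos (mul_pos (hw i j k hij hjk) (hφ i)) (hφ j)) (hφ k))
  apply Finset.sum_pos'
  · intro i _
    refine Finset.sum_nonneg fun j hj => Finset.sum_nonneg fun k hk =>
      tnn i j k (Finset.mem_Ioi.mp hj) (Finset.mem_Ioi.mp hk)
  · refine ⟨i0, Finset.mem_univ _, ?_⟩
    apply Finset.sum_pos'
    · intro j hj
      refine Finset.sum_nonneg fun k hk =>
        tnn i0 j k (Finset.mem_Ioi.mp hj) (Finset.mem_Ioi.mp hk)
    · refine ⟨j0, Finset.mem_Ioi.mpr h1, ?_⟩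
      apply Finset.sum_pos'
      · intro k hk
        exact tnn i0 j0 k h1 (Finset.mem_Ioi.mp hk)
      · exact ⟨k0, Finset.mem_Ioi.mpr h2,
          mul_pos (mul_pos (mul_pos (hw i0 j0 k0 h1 h2) (hφ i0)) (hφ j0)) (hφ k0)⟩

/-- Deleting the last vertex of a convex polygon with `n+1 ≥ 4`
vertices at height one strictly decreases the `a`-function: for every `φ` in
the relative interior of `Γₙ` there is `ψ` in the relative interior of `Γₙ₊₁`
with `F_Q(φ) < F_P(ψ)`; consequently the maximum of `F_Q` over `Γₙ` is
strictly smaller than the maximum of `F_P` over `Γₙ₊₁`. -/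
theorem delete_vertex_decreases_max (n : ℕ) (hn : 3 ≤ n)
    (v : Fin (n + 1) → (Fin 3 → ℝ)) (hheight : ∀ i, v i 2 = 1)
    (hccw : ∀ i j k : Fin (n + 1), i < j → j < k →
      0 < det3 (v i) (v j) (v k))
    (r : ℝ) (hr : 0 < r)
    (FP : (Fin (n + 1) → ℝ) → ℝ)
    (hFP : FP = fun ψ => ∑ i, ∑ j ∈ Finset.Ioi i, ∑ k ∈ Finset.Ioi j,
      |det3 (v i) (v j) (v k)| * ψ i * ψ j * ψ k)
    (FQ : (Fin n → ℝ) → ℝ)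
    (hFQ : FQ = fun φ => ∑ i, ∑ j ∈ Finset.Ioi i, ∑ k ∈ Finset.Ioi j,
      |det3 (v i.castSucc) (v j.castSucc) (v k.castSucc)| * φ i * φ j * φ k) :
    (∀ φ : Fin n → ℝ, (∀ i, 0 < φ i) → ∑ i, φ i = r →
      ∃ ψ : Fin (n + 1) → ℝ, (∀ i, 0 < ψ i) ∧ ∑ i, ψ i = r ∧ FQ φ < FP ψ) ∧
    (∀ M M' : ℝ,
      IsGreatest (FQ '' {φ | (∀ i, 0 ≤ φ i) ∧ ∑ i, φ i = r}) M →
      IsGreatest (FP '' {ψ | (∀ i, 0 ≤ ψ i) ∧ ∑ i, ψ i = r}) M' →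
      M < M') := by
  subst hFP
  subst hFQ
  have hpart1 : ∀ φ : Fin n → ℝ, (∀ i, 0 ≤ φ i) → (∑ i, φ i = r) →
      (∃ a m b : Fin n, a < m ∧ m < b ∧ 0 < φ a ∧ 0 < φ b ∧
        (∀ i, φ i ≠ 0 → a ≤ i ∧ i ≤ b)) →
      ∃ ψ : Fin (n + 1) → ℝ, (∀ i, 0 ≤ ψ i) ∧
        (∀ i, (Fin.snoc φ 0 : Fin (n+1) → ℝ) i ≠ 0 → 0 < ψ i) ∧
        0 < ψ (Fin.last n) ∧ (∑ i, ψ i) = r ∧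
        (∑ i, ∑ j ∈ Finset.Ioi i, ∑ k ∈ Finset.Ioi j,
          |det3 (v i.castSucc) (v j.castSucc) (v k.castSucc)| * φ i * φ j * φ k) <
        (∑ i, ∑ j ∈ Finset.Ioi i, ∑ k ∈ Finset.Ioi j,
          |det3 (v i) (v j) (v k)| * ψ i * ψ j * ψ k) := by
    rintro φ hφ0 hφsum ⟨a, m, b, ham, hmb, ha, hb, hsupp⟩
    have hη := dv_snoc_nonneg φ hφ0
    have hlastz : (Fin.snoc φ 0 : Fin (n+1) → ℝ) (Fin.last n) = 0 := by simp
    obtain ⟨ψ, h1, h2, h3, h4, h5⟩ := dv_key v hheight hccw (Fin.snoc φ 0) hη hlastz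
      a.castSucc m.castSucc b.castSucc
      (Fin.castSucc_lt_castSucc_iff.mpr ham) (Fin.castSucc_lt_castSucc_iff.mpr hmb)
      (Fin.castSucc_lt_last b)
      (by rw [Fin.snoc_castSucc]; exact ha) (by rw [Fin.snoc_castSucc]; exact hb)
      (by
        intro i hi
        have hne : i ≠ Fin.last n := by
          intro h
          rw [h, hlastz] at hi
          exact hi rfl
        obtain ⟨i', rfl⟩ := Fin.exists_castSucc_eq.mpr hne
        rw [Fin.snoc_castSucc] at hi
        exact ⟨Fin.castSucc_le_castSucc_iff.mpr (hsupp i' hi).1,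
          Fin.castSucc_le_castSucc_iff.mpr (hsupp i' hi).2⟩)
    rw [dv_snoc v φ] at h5
    rw [dv_snoc_sum φ, hφsum] at h4
    exact ⟨ψ, h1, h2, h3, h4, h5⟩
  constructor
  · intro φ hφ hφsum
    obtain ⟨ψ, h1, h2, h3, h4, h5⟩ := hpart1 φ (fun i => (hφ i).le) hφsum
      ⟨⟨0, by omega⟩, ⟨1, by omega⟩, ⟨n-1, by omega⟩,
        Fin.mk_lt_mk.mpr (by omega), Fin.mk_lt_mk.mpr (by omega), hφ _, hφ _,
        fun i _ => by
          rcases i with ⟨iv, hiv⟩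
          exact ⟨Fin.mk_le_mk.mpr (by omega), Fin.mk_le_mk.mpr (by omega)⟩⟩
    refine ⟨ψ, ?_, h4, h5⟩
    intro i
    induction i using Fin.lastCases with
    | last => exact h3
    | cast j => exact h2 j.castSucc (by rw [Fin.snoc_castSucc]; exact (hφ j).ne')
  · intro M M' hM hM'
    obtain ⟨φ, ⟨hφ0, hφsum⟩, hφM⟩ := hM.1
    have hn0 : (0:ℝ) < (n:ℝ) := by
      have : 0 < n := by omega
      exact_mod_cast this
    have hcpos : 0 < r / (n:ℝ) := div_pos hr hn0
    have humem : (fun _ : Fin n => r / (n:ℝ)) ∈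
        {φ : Fin n → ℝ | (∀ i, 0 ≤ φ i) ∧ ∑ i, φ i = r} := by
      refine ⟨fun _ => hcpos.le, ?_⟩
      rw [Finset.sum_const, Finset.card_univ, Fintype.card_fin, nsmul_eq_mul]
      field_simp
    have hUB := hM.2 (Set.mem_image_of_mem _ humem)
    beta_reduce at hUB
    have hw : ∀ i j k : Fin n, i < j → j < k →
        0 < |det3 (v i.castSucc) (v j.castSucc) (v k.castSucc)| :=
      fun i j k h1 h2 => abs_pos.mpr (ne_of_gt (hccw _ _ _
        (Fin.castSucc_lt_castSucc_iff.mpr h1) (Fin.castSucc_lt_castSucc_iff.mpr h2)))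
    obtain ⟨e0, e1, e2, h01, h12⟩ : ∃ e0 e1 e2 : Fin n, e0 < e1 ∧ e1 < e2 :=
      ⟨⟨0, by omega⟩, ⟨1, by omega⟩, ⟨2, by omega⟩,
        Fin.mk_lt_mk.mpr (by omega), Fin.mk_lt_mk.mpr (by omega)⟩
    have hpos := dv_pos _ hw (fun _ => r / (n:ℝ)) (fun _ => hcpos) e0 e1 e2 h01 h12
    beta_reduce at hpos
    have hMpos : 0 < M := lt_of_lt_of_le hpos hUB
    beta_reduce at hφM
    have hsum_eq : (∑ i, ∑ j ∈ Finset.Ioi i, ∑ k ∈ Finset.Ioi j,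
        |det3 (v i.castSucc) (v j.castSucc) (v k.castSucc)| * φ i * φ j * φ k) = M := hφM
    have hne : (∑ i, ∑ j ∈ Finset.Ioi i, ∑ k ∈ Finset.Ioi j,
        |det3 (v i.castSucc) (v j.castSucc) (v k.castSucc)| * φ i * φ j * φ k) ≠ 0 := by
      rw [hsum_eq]; exact ne_of_gt hMpos
    obtain ⟨i0, _, hi0⟩ := Finset.exists_ne_zero_of_sum_ne_zero hne
    obtain ⟨j0, hj0mem, hj0⟩ := Finset.exists_ne_zero_of_sum_ne_zero hi0
    obtain ⟨k0, hk0mem, hk0⟩ := Finset.exists_ne_zero_of_sum_ne_zero hj0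
    have hij : i0 < j0 := Finset.mem_Ioi.mp hj0mem
    have hjk : j0 < k0 := Finset.mem_Ioi.mp hk0mem
    have hφijk : φ i0 ≠ 0 ∧ φ j0 ≠ 0 ∧ φ k0 ≠ 0 := by
      rcases mul_ne_zero_iff.mp hk0 with ⟨h', h3⟩
      rcases mul_ne_zero_iff.mp h' with ⟨h'', h2⟩
      rcases mul_ne_zero_iff.mp h'' with ⟨_, h1⟩
      exact ⟨h1, h2, h3⟩
    obtain ⟨S, hS⟩ : ∃ S : Finset (Fin n), S = Finset.filter (fun i => φ i ≠ 0) Finset.univ :=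
      ⟨_, rfl⟩
    have hmemS : ∀ i, i ∈ S ↔ φ i ≠ 0 := by intro i; rw [hS]; simp
    have hSne : S.Nonempty := ⟨i0, (hmemS i0).mpr hφijk.1⟩
    obtain ⟨a, hadef⟩ : ∃ a, a = S.min' hSne := ⟨_, rfl⟩
    obtain ⟨b, hbdef⟩ : ∃ b, b = S.max' hSne := ⟨_, rfl⟩
    have haS : a ∈ S := hadef ▸ S.min'_mem hSne
    have hbS : b ∈ S := hbdef ▸ S.max'_mem hSne
    have hφa : 0 < φ a := (hφ0 a).lt_of_ne (Ne.symm ((hmemS a).mp haS))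
    have hφb : 0 < φ b := (hφ0 b).lt_of_ne (Ne.symm ((hmemS b).mp hbS))
    have ham : a < j0 :=
      lt_of_le_of_lt (hadef ▸ S.min'_le i0 ((hmemS i0).mpr hφijk.1)) hij
    have hmb : j0 < b :=
      lt_of_lt_of_le hjk (hbdef ▸ S.le_max' k0 ((hmemS k0).mpr hφijk.2.2))
    have hsupp : ∀ i, φ i ≠ 0 → a ≤ i ∧ i ≤ b := fun i hi =>
      ⟨hadef ▸ S.min'_le i ((hmemS i).mpr hi), hbdef ▸ S.le_max' i ((hmemS i).mpr hi)⟩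
    obtain ⟨ψ, h1, h2, h3, h4, h5⟩ := hpart1 φ hφ0 hφsum ⟨a, j0, b, ham, hmb, hφa, hφb, hsupp⟩
    have hψmem := hM'.2 (Set.mem_image_of_mem _ (Set.mem_setOf.mpr ⟨h1, h4⟩))
    beta_reduce at hψmem
    rw [hsum_eq] at h5
    exact lt_of_lt_of_le h5 hψmem
end
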